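/- Let s : ℝ≥0 × ℝⁿ → ℝⁿ be a measurable family of time-t maps s_t, let h₀ : ℝⁿ → ℝ≥0 be a measurable initial density, μ₀ = Leb.withDensity h₀, and let ρ(x) = ∫_{(0,∞)} ψ_t(x) dt be the occupancy density, where ψ_t is a measurable density of (s_t)_*μ₀ with (t,x) ↦ ψ_t(x) jointly measurable. Then for every measurable set A ⊆ ℝⁿ, ∫_A ρ(x) dx = ∫_{ℝⁿ} ( ∫_{(0,∞)} 1_A(s_t(x)) dt ) h₀(x) dx; that is, the measure ϑ(A) := ∫_A ρ dx equals the expected total time spent by trajectories in A. -/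

import Mathlib

open MeasureTheory Measure
open scoped ENNReal

section Occupancy

variable {α β T : Type*} [MeasurableSpace α] [MeasurableSpace β] [MeasurableSpace T]

theorem map_withDensity_apply_eq_lintegral_indicator {μ : Measure α} {f : α → β}
    (hf : Measurable f) (h : α → ℝ≥0∞) {A : Set β} (hA : MeasurableSet A) :
    (μ.withDensity h).map f A = ∫⁻ x, A.indicator (fun _ => (1 : ℝ≥0∞)) (f x) * h x ∂μ := by
  rw [map_apply hf hA, withDensity_apply _ (hf hA), ← lintegral_indicator (hf hA)]
  refine lintegral_congr fun x => ?_
  by_cases hx : f x ∈ A <;> simp [Set.indicator, hx]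

/-- Tonelli twice, with the pushforward identity in the middle: the mass that `ψ t` puts on `A`
is the `μ.withDensity h`-measure of the trajectories that are in `A` at time `t`. -/
theorem setLIntegral_occupancy_eq_lintegral_sojourn {μ : Measure α} {ν : Measure β}
    {τ : Measure T} [SFinite μ] [SFinite ν] [SFinite τ]
    {s : T × α → β} (hs : Measurable s) {h : α → ℝ≥0∞} (hh : Measurable h)
    {ψ : T × β → ℝ≥0∞} (hψ : Measurable ψ)
    (hpush : ∀ᵐ t ∂τ,
      (μ.withDensity h).map (fun x => s (t, x)) = ν.withDensity (fun y => ψ (t, y)))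
    {A : Set β} (hA : MeasurableSet A) :
    ∫⁻ y in A, ∫⁻ t, ψ (t, y) ∂τ ∂ν
      = ∫⁻ x, (∫⁻ t, A.indicator (fun _ => (1 : ℝ≥0∞)) (s (t, x)) ∂τ) * h x ∂μ := by
  have hind : Measurable fun p : T × α => A.indicator (fun _ => (1 : ℝ≥0∞)) (s p) :=
    (measurable_one.indicator hA).comp hs
  calc ∫⁻ y in A, ∫⁻ t, ψ (t, y) ∂τ ∂ν
      = ∫⁻ t, ∫⁻ y in A, ψ (t, y) ∂ν ∂τ :=
        lintegral_lintegral_swap (hψ.comp measurable_swap).aemeasurable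
    _ = ∫⁻ t, ∫⁻ x, A.indicator (fun _ => (1 : ℝ≥0∞)) (s (t, x)) * h x ∂μ ∂τ := by
        refine lintegral_congr_ae (hpush.mono fun t ht => ?_)
        dsimp only
        rw [← withDensity_apply _ hA, ← ht]
        exact map_withDensity_apply_eq_lintegral_indicator (hs.comp measurable_prodMk_left) h hA
    _ = ∫⁻ x, ∫⁻ t, A.indicator (fun _ => (1 : ℝ≥0∞)) (s (t, x)) * h x ∂τ ∂μ :=
        lintegral_lintegral_swap (hind.mul (hh.comp measurable_snd)).aemeasurable
    _ = ∫⁻ x, (∫⁻ t, A.indicator (fun _ => (1 : ℝ≥0∞)) (s (t, x)) ∂τ) * h x ∂μ :=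
        lintegral_congr fun x => lintegral_mul_const _ (hind.comp measurable_prodMk_right)

end Occupancy

/-- **Occupancy interpretation.** With `ρ` the occupancy density of the family of time-`t`
maps `s t` and the initial density `h₀`, the measure `ϑ(A) = ∫_A ρ dx` of any measurable
set `A` equals the expected total time spent by trajectories in `A`. -/
theorem occupancy_eq_expected_time {n : ℕ}
    (s : ℝ × (Fin n → ℝ) → (Fin n → ℝ)) (hs : Measurable s)
    (h₀ : (Fin n → ℝ) → ℝ≥0∞) (hh₀ : Measurable h₀)
    (ψ : ℝ × (Fin n → ℝ) → ℝ≥0∞) (hψ : Measurable ψ)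
    (hpush : ∀ t : ℝ, 0 ≤ t →
      Measure.map (fun x => s (t, x)) (volume.withDensity h₀)
        = volume.withDensity (fun x => ψ (t, x)))
    (ρ : (Fin n → ℝ) → ℝ≥0∞)
    (hρ : ∀ x, ρ x = ∫⁻ t in Set.Ioi (0 : ℝ), ψ (t, x))
    (A : Set (Fin n → ℝ)) (hA : MeasurableSet A) :
    ∫⁻ x in A, ρ x
      = ∫⁻ x, (∫⁻ t in Set.Ioi (0 : ℝ), A.indicator (fun _ => (1 : ℝ≥0∞)) (s (t, x))) * h₀ x := by
  rw [funext hρ]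
  exact setLIntegral_occupancy_eq_lintegral_sojourn hs hh₀ hψ
    (ae_restrict_of_forall_mem measurableSet_Ioi fun t ht => hpush t (le_of_lt ht)) hA
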